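/- arXiv:1408.1920 — 3 statements merged into one kernel-verified Lean document; each statement's English description precedes it below -/
import Mathlib

section
/- For the double-well probability measure μ_ε ∝ exp(−(x⁴ + x²/2)/ε) dx on ℝ, the normalization satisfies Z_ε = √(2πε)(1 + O(ε)); explicitly √(2πε)(1 − 3ε) ≤ Z_ε ≤ √(2πε) for all ε ∈ (0, 1/3). -/
open Real MeasureTheory Set

lemma gamma_five_half : Real.Gamma (5/2) = 3/4 * Real.sqrt Real.pi := by
  have h32 : Real.Gamma (3/2) = 1/2 * Real.sqrt Real.pi := by
    rw [show (3/2 : ℝ) = 1/2 + 1 by norm_num, Real.Gamma_add_one (by norm_num),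
      Real.Gamma_one_half_eq]
  rw [show (5/2 : ℝ) = 3/2 + 1 by norm_num, Real.Gamma_add_one (by norm_num), h32]
  ring

lemma gauss_moment4 {b : ℝ} (hb : 0 < b) :
    ∫ x : ℝ, x ^ 4 * Real.exp (-b * x ^ 2)
      = b ^ (-(5:ℝ)/2) * Real.Gamma (5/2) := by
  have h1 : ∫ x : ℝ, x ^ 4 * Real.exp (-b * x ^ 2)
      = ∫ x : ℝ, (fun t : ℝ => t ^ 4 * Real.exp (-b * t ^ 2)) |x| := by
    congr 1; ext x
    have h4 : |x| ^ 4 = x ^ 4 := by rw [← abs_pow, abs_of_nonneg (by positivity)]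
    simp [h4, sq_abs]
  rw [h1, integral_comp_abs (f := fun t : ℝ => t ^ 4 * Real.exp (-b * t ^ 2))]
  have h2 : ∫ x in Ioi (0:ℝ), x ^ 4 * Real.exp (-b * x ^ 2)
      = ∫ x in Ioi (0:ℝ), x ^ (4:ℝ) * Real.exp (-b * x ^ (2:ℝ)) := by
    refine setIntegral_congr_fun measurableSet_Ioi (fun x hx => ?_)
    rw [show x ^ (4:ℝ) = x ^ (4:ℕ) by rw [← Real.rpow_natCast x 4]; norm_num,
      show x ^ (2:ℝ) = x ^ (2:ℕ) by rw [← Real.rpow_natCast x 2]; norm_num]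
  rw [h2, integral_rpow_mul_exp_neg_mul_rpow (by norm_num) (by norm_num) hb]
  norm_num
  ring

theorem stmt_11 (ε : ℝ) (hε : 0 < ε) (hε' : ε < 1 / 3)
    (Z : ℝ) (hZ : Z = ∫ x : ℝ, Real.exp (-(x ^ 4 + x ^ 2 / 2) / ε)) :
    Real.sqrt (2 * Real.pi * ε) * (1 - 3 * ε) ≤ Z ∧ Z ≤ Real.sqrt (2 * Real.pi * ε) := by
  set b : ℝ := 1 / (2 * ε) with hbdef
  have hb : 0 < b := by positivity
  -- pointwise upper bound
  have hub : ∀ x : ℝ, Real.exp (-(x ^ 4 + x ^ 2 / 2) / ε) ≤ Real.exp (-b * x ^ 2) := by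
    intro x
    apply Real.exp_le_exp.mpr
    rw [show -b * x ^ 2 = -(x ^ 2 / 2) / ε by rw [hbdef]; field_simp]
    have hx4 : (0:ℝ) ≤ x ^ 4 := by positivity
    exact (div_le_div_iff_of_pos_right hε).mpr (by linarith)
  -- integrability of the main integrand
  have hcont : Continuous fun x : ℝ => Real.exp (-(x ^ 4 + x ^ 2 / 2) / ε) := by
    fun_prop
  have hZint : Integrable fun x : ℝ => Real.exp (-(x ^ 4 + x ^ 2 / 2) / ε) := by
    refine (integrable_exp_neg_mul_sq hb).mono' hcont.aestronglyMeasurable ?_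
    filter_upwards with x
    rw [Real.norm_eq_abs, abs_of_nonneg (Real.exp_pos _).le]
    exact hub x
  -- integrability of x^4 * gaussian
  have h4int : Integrable fun x : ℝ => x ^ 4 * Real.exp (-b * x ^ 2) := by
    have := integrable_rpow_mul_exp_neg_mul_sq hb (s := 4) (by norm_num)
    refine this.congr ?_
    filter_upwards with x
    rw [show x ^ (4:ℝ) = x ^ (4:ℕ) by rw [← Real.rpow_natCast x 4]; norm_num]
  -- Gaussian integral value
  have hgauss : ∫ x : ℝ, Real.exp (-b * x ^ 2) = Real.sqrt (2 * Real.pi * ε) := by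
    rw [integral_gaussian]
    congr 1
    rw [hbdef]
    field_simp
  -- fourth moment value
  have h2ε : (0:ℝ) < 2 * ε := by positivity
  have hmom : ∫ x : ℝ, x ^ 4 * Real.exp (-b * x ^ 2)
      = 3 * ε ^ 2 * Real.sqrt (2 * Real.pi * ε) := by
    rw [gauss_moment4 hb, gamma_five_half]
    have hbpow : b ^ (-(5:ℝ)/2) = (Real.sqrt (2 * ε)) ^ 5 := by
      have e1 : b ^ (-(5:ℝ)/2) = (2*ε) ^ ((5:ℝ)/2) := by
        rw [hbdef, one_div, Real.inv_rpow h2ε.le, ← Real.rpow_neg h2ε.le]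
        norm_num
      have e2 : (2*ε) ^ ((5:ℝ)/2) = (Real.sqrt (2*ε)) ^ (5:ℕ) := by
        rw [show ((5:ℝ)/2) = (1/2) * ((5:ℕ):ℝ) by push_cast; norm_num,
          Real.rpow_mul h2ε.le, Real.rpow_natCast, Real.sqrt_eq_rpow]
      rw [e1, e2]
    have hs : Real.sqrt (2 * Real.pi * ε) = Real.sqrt Real.pi * Real.sqrt (2 * ε) := by
      rw [show 2 * Real.pi * ε = Real.pi * (2 * ε) by ring,
        Real.sqrt_mul Real.pi_nonneg]
    have hsq : Real.sqrt (2 * ε) ^ 2 = 2 * ε := Real.sq_sqrt h2ε.le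
    rw [hbpow, hs]
    have : (Real.sqrt (2 * ε)) ^ 5 = (2 * ε) ^ 2 * Real.sqrt (2 * ε) := by
      rw [show 5 = 2 * 2 + 1 by norm_num, pow_succ, pow_mul, hsq]
    rw [this]; ring
  -- lower bound integrand
  have hgint : Integrable fun x : ℝ => (1 - x ^ 4 / ε) * Real.exp (-b * x ^ 2) := by
    have : (fun x : ℝ => (1 - x ^ 4 / ε) * Real.exp (-b * x ^ 2))
        = fun x : ℝ => Real.exp (-b * x ^ 2) - (1/ε) * (x ^ 4 * Real.exp (-b * x ^ 2)) := by
      ext x; ring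
    rw [this]
    exact (integrable_exp_neg_mul_sq hb).sub (h4int.const_mul _)
  have hlb : ∀ x : ℝ, (1 - x ^ 4 / ε) * Real.exp (-b * x ^ 2)
      ≤ Real.exp (-(x ^ 4 + x ^ 2 / 2) / ε) := by
    intro x
    have hsplit : Real.exp (-(x ^ 4 + x ^ 2 / 2) / ε)
        = Real.exp (-(x ^ 4 / ε)) * Real.exp (-b * x ^ 2) := by
      rw [← Real.exp_add]
      congr 1
      rw [hbdef]
      field_simp
      ring
    rw [hsplit]
    have h1 : 1 - x ^ 4 / ε ≤ Real.exp (-(x ^ 4 / ε)) := by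
      have := Real.add_one_le_exp (-(x ^ 4 / ε))
      linarith
    exact mul_le_mul_of_nonneg_right h1 (Real.exp_pos _).le
  constructor
  · -- lower bound
    have hineq : ∫ x : ℝ, (1 - x ^ 4 / ε) * Real.exp (-b * x ^ 2) ≤ Z := by
      rw [hZ]
      exact integral_mono hgint hZint hlb
    have hval : ∫ x : ℝ, (1 - x ^ 4 / ε) * Real.exp (-b * x ^ 2)
        = Real.sqrt (2 * Real.pi * ε) * (1 - 3 * ε) := by
      have : (fun x : ℝ => (1 - x ^ 4 / ε) * Real.exp (-b * x ^ 2))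
          = fun x : ℝ => Real.exp (-b * x ^ 2) - (1/ε) * (x ^ 4 * Real.exp (-b * x ^ 2)) := by
        ext x; ring
      rw [this, integral_sub (integrable_exp_neg_mul_sq hb) (h4int.const_mul _),
        integral_const_mul, hgauss, hmom]
      field_simp
    linarith
  · -- upper bound
    rw [hZ, ← hgauss]
    exact integral_mono hZint (integrable_exp_neg_mul_sq hb) hub
end

section
/- The second moment of μ_ε ∝ exp(−(x⁴+x²/2)/ε)dx satisfies E^{μ_ε}[u²] = ε + O(ε²), and the fourth moment satisfies E^{μ_ε}[u⁴] = 3ε² + O(ε³), as ε → 0. -/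
open MeasureTheory Real Nat

-- step 1: |x|^n ≤ n! * exp |x|, and integrability of x^n * exp(-(x^2/2))
lemma aux_pow_le (n : ℕ) (x : ℝ) (hx : 0 ≤ x) : x ^ n ≤ (n ! : ℝ) * Real.exp x := by
  have h := Real.sum_le_exp_of_nonneg hx (n+1)
  have h2 : x ^ n / (n ! : ℝ) ≤ ∑ i ∈ Finset.range (n+1), x ^ i / (i ! : ℝ) := by
    apply Finset.single_le_sum (f := fun i => x ^ i / (i ! : ℝ))
    · intro i _; positivity
    · simp
  have hn : (0:ℝ) < (n ! : ℝ) := by positivity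
  calc x ^ n = (x ^ n / (n ! : ℝ)) * (n ! : ℝ) := by field_simp
    _ ≤ Real.exp x * (n ! : ℝ) := by nlinarith [h2.trans h]
    _ = (n ! : ℝ) * Real.exp x := mul_comm _ _

lemma int_pow_gauss (n : ℕ) : Integrable (fun x : ℝ => x ^ n * Real.exp (-(x^2/2))) := by
  have hbase : Integrable (fun x : ℝ => (((n ! : ℝ)) * Real.exp 1) * Real.exp (-(1/4 : ℝ) * x ^ 2)) :=
    (integrable_exp_neg_mul_sq (by norm_num)).const_mul _
  refine hbase.mono' (Continuous.aestronglyMeasurable (by continuity)) ?_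
  filter_upwards with x
  have h1 : |x| ^ n ≤ ((n ! : ℝ)) * Real.exp |x| := aux_pow_le n |x| (abs_nonneg x)
  have h2 : |x| ≤ 1 + x ^ 2 / 4 := by nlinarith [sq_nonneg (|x| - 2), sq_abs x]
  have h3 : Real.exp |x| ≤ Real.exp (1 + x^2/4) := Real.exp_le_exp.2 h2
  have hn : (0:ℝ) < (n ! : ℝ) := by positivity
  rw [Real.norm_eq_abs, abs_mul, abs_pow, abs_of_pos (Real.exp_pos _)]
  calc |x| ^ n * Real.exp (-(x^2/2)) ≤ (((n ! : ℝ)) * Real.exp (1 + x^2/4)) * Real.exp (-(x^2/2)) := by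
        apply mul_le_mul_of_nonneg_right (h1.trans (by nlinarith [Real.exp_pos |x|])) (Real.exp_pos _).le
    _ = (((n ! : ℝ)) * Real.exp 1) * Real.exp (-(1/4:ℝ) * x ^ 2) := by
        rw [mul_assoc, ← Real.exp_add, mul_assoc, ← Real.exp_add]; ring_nf

lemma int_pow_f {ε : ℝ} (hε : 0 ≤ ε) (k : ℕ) :
    Integrable (fun t : ℝ => t ^ k * Real.exp (-(ε * t ^ 4) - t ^ 2 / 2)) := by
  refine (int_pow_gauss k).abs.mono' (Continuous.aestronglyMeasurable (by continuity)) ?_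
  filter_upwards with t
  have h1 : Real.exp (-(ε * t ^ 4) - t ^ 2 / 2) ≤ Real.exp (-(t ^ 2 / 2)) := by
    apply Real.exp_le_exp.2; nlinarith [pow_nonneg (sq_nonneg t) 1, sq_nonneg (t^2)]
  rw [Real.norm_eq_abs, abs_mul, abs_of_pos (Real.exp_pos _), abs_mul,
    abs_of_pos (Real.exp_pos _)]
  exact mul_le_mul_of_nonneg_left h1 (abs_nonneg _)

noncomputable def gmom (k : ℕ) : ℝ := ∫ x : ℝ, x ^ k * Real.exp (-(x ^ 2 / 2))

lemma gmom_rec (k : ℕ) : gmom (k + 2) = (k + 1) * gmom k := by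
  have hu : ∀ x : ℝ, HasDerivAt (fun x : ℝ => x ^ (k+1)) (((k:ℝ)+1) * x ^ k) x := by
    intro x
    simpa using hasDerivAt_pow (k+1) x
  have hv : ∀ x : ℝ, HasDerivAt (fun x : ℝ => Real.exp (-(x ^ 2 / 2))) (-x * Real.exp (-(x ^ 2 / 2))) x := by
    intro x
    have h1 : HasDerivAt (fun x : ℝ => -(x ^ 2 / 2)) (-x) x := by
      simpa using ((hasDerivAt_pow 2 x).div_const 2).fun_neg
    simpa [mul_comm] using h1.exp
  have huv' : Integrable ((fun x : ℝ => x ^ (k+1)) * (fun x : ℝ => -x * Real.exp (-(x ^ 2 / 2)))) := by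
    have := (int_pow_gauss (k+2)).neg
    refine this.congr (Filter.Eventually.of_forall fun x => by simp; ring)
  have hu'v : Integrable ((fun x : ℝ => ((k:ℝ)+1) * x ^ k) * (fun x : ℝ => Real.exp (-(x ^ 2 / 2)))) := by
    have := (int_pow_gauss k).const_mul ((k:ℝ)+1)
    refine this.congr (Filter.Eventually.of_forall fun x => by simp; ring)
  have huv : Integrable ((fun x : ℝ => x ^ (k+1)) * (fun x : ℝ => Real.exp (-(x ^ 2 / 2)))) := by
    refine (int_pow_gauss (k+1)).congr (Filter.Eventually.of_forall fun x => by simp)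
  have h := integral_mul_deriv_eq_deriv_mul_of_integrable (fun x _ => hu x) (fun x _ => hv x) huv' hu'v huv
  have e1 : ∫ x : ℝ, x ^ (k+1) * (-x * Real.exp (-(x ^ 2 / 2))) = -gmom (k+2) := by
    rw [gmom, ← integral_neg]; congr 1; funext x; ring
  have e2 : ∫ x : ℝ, ((k:ℝ)+1) * x ^ k * Real.exp (-(x ^ 2 / 2)) = ((k:ℝ)+1) * gmom k := by
    rw [gmom, ← integral_const_mul]; congr 1; funext x; ring
  rw [e1, e2] at h
  have : gmom (k+2) = ((k:ℝ)+1) * gmom k := by linarith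
  simpa using this

lemma gmom_zero_pos : 0 < gmom 0 := by
  have : gmom 0 = ∫ x : ℝ, Real.exp (-(1/2 : ℝ) * x ^ 2) := by
    rw [gmom]; congr 1; funext x; rw [pow_zero, one_mul]; ring_nf
  rw [this, integral_gaussian]
  positivity

noncomputable def fmom (ε : ℝ) (k : ℕ) : ℝ := ∫ t : ℝ, t ^ k * Real.exp (-(ε * t ^ 4) - t ^ 2 / 2)

lemma fmom_close {ε : ℝ} (hε : 0 ≤ ε) {k : ℕ} (hk : Even k) :
    |fmom ε k - gmom k| ≤ ε * gmom (k + 4) := by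
  rw [fmom, gmom, ← integral_sub (int_pow_f hε k) (int_pow_gauss k)]
  have hbound : ∀ t : ℝ, ‖t ^ k * Real.exp (-(ε * t ^ 4) - t ^ 2 / 2) - t ^ k * Real.exp (-(t ^ 2 / 2))‖
      ≤ ε * (t ^ (k + 4) * Real.exp (-(t ^ 2 / 2))) := by
    intro t
    have hsplit : Real.exp (-(ε * t ^ 4) - t ^ 2 / 2)
        = Real.exp (-(ε * t ^ 4)) * Real.exp (-(t ^ 2 / 2)) := by
      rw [← Real.exp_add]; ring_nf
    have habs : |t ^ k| = t ^ k := abs_of_nonneg (hk.pow_nonneg t)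
    have h1 : |Real.exp (-(ε * t ^ 4)) - 1| ≤ ε * t ^ 4 := by
      rw [abs_sub_comm, abs_of_nonneg (by simp [Real.exp_le_one_iff]; positivity)]
      nlinarith [Real.add_one_le_exp (-(ε * t ^ 4))]
    calc ‖t ^ k * Real.exp (-(ε * t ^ 4) - t ^ 2 / 2) - t ^ k * Real.exp (-(t ^ 2 / 2))‖
        = |t ^ k| * (|Real.exp (-(ε * t ^ 4)) - 1| * Real.exp (-(t ^ 2 / 2))) := by
          rw [hsplit]
          have heq : t ^ k * (Real.exp (-(ε * t ^ 4)) * Real.exp (-(t ^ 2 / 2)))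
              - t ^ k * Real.exp (-(t ^ 2 / 2))
              = t ^ k * ((Real.exp (-(ε * t ^ 4)) - 1) * Real.exp (-(t ^ 2 / 2))) := by ring
          rw [heq, Real.norm_eq_abs, abs_mul, abs_mul, abs_of_pos (Real.exp_pos _)]
      _ ≤ t ^ k * ((ε * t ^ 4) * Real.exp (-(t ^ 2 / 2))) := by
          rw [habs]
          exact mul_le_mul_of_nonneg_left
            (mul_le_mul_of_nonneg_right h1 (Real.exp_pos _).le) (hk.pow_nonneg t)
      _ = ε * (t ^ (k + 4) * Real.exp (-(t ^ 2 / 2))) := by rw [pow_add]; ring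
  calc |∫ t : ℝ, (t ^ k * Real.exp (-(ε * t ^ 4) - t ^ 2 / 2) - t ^ k * Real.exp (-(t ^ 2 / 2)))|
      ≤ ∫ t : ℝ, ε * (t ^ (k + 4) * Real.exp (-(t ^ 2 / 2))) := by
        refine (norm_integral_le_of_norm_le ((int_pow_gauss (k+4)).const_mul ε)
          (Filter.Eventually.of_forall hbound))
    _ = ε * gmom (k + 4) := by rw [gmom, ← integral_const_mul]

lemma change_var {ε : ℝ} (hε : 0 < ε) (k : ℕ) :
    ∫ x : ℝ, x ^ k * Real.exp (-(x ^ 4 + x ^ 2 / 2) / ε)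
      = Real.sqrt ε * (Real.sqrt ε ^ k * fmom ε k) := by
  set s := Real.sqrt ε with hs_def
  have hs : 0 < s := Real.sqrt_pos.2 hε
  have hs2 : s ^ 2 = ε := Real.sq_sqrt hε.le
  have h := MeasureTheory.Measure.integral_comp_mul_left
    (fun x : ℝ => x ^ k * Real.exp (-(x ^ 4 + x ^ 2 / 2) / ε)) s
  have heq : ∀ t : ℝ, (s * t) ^ k * Real.exp (-((s * t) ^ 4 + (s * t) ^ 2 / 2) / ε)
      = s ^ k * (t ^ k * Real.exp (-(ε * t ^ 4) - t ^ 2 / 2)) := by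
    intro t
    have hexp : -((s * t) ^ 4 + (s * t) ^ 2 / 2) / ε = -(ε * t ^ 4) - t ^ 2 / 2 := by
      have : (s * t) ^ 4 = ε ^ 2 * t ^ 4 := by rw [mul_pow, ← hs2]; ring
      have h2 : (s * t) ^ 2 = ε * t ^ 2 := by rw [mul_pow, hs2]
      rw [this, h2]; field_simp; ring
    rw [hexp, mul_pow]; ring
  rw [show (fun t : ℝ => (fun x : ℝ => x ^ k * Real.exp (-(x ^ 4 + x ^ 2 / 2) / ε)) (s * t))
      = fun t : ℝ => s ^ k * (t ^ k * Real.exp (-(ε * t ^ 4) - t ^ 2 / 2)) from funext heq] at h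
  rw [integral_const_mul, abs_of_pos (inv_pos.2 hs), smul_eq_mul] at h
  rw [fmom] at *
  rw [h, ← mul_assoc, mul_inv_cancel₀ hs.ne', one_mul]

lemma gmom2 : gmom 2 = gmom 0 := by simpa using gmom_rec 0
lemma gmom4 : gmom 4 = 3 * gmom 0 := by
  have h := gmom_rec 2; rw [gmom2] at h; norm_num at h; linarith
lemma gmom6 : gmom 6 = 15 * gmom 0 := by
  have h := gmom_rec 4; rw [gmom4] at h; norm_num at h; linarith
lemma gmom8 : gmom 8 = 105 * gmom 0 := by
  have h := gmom_rec 6; rw [gmom6] at h; norm_num at h; linarith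

theorem stmt_13 :
    ∃ C ε₀ : ℝ, 0 < C ∧ 0 < ε₀ ∧ ∀ ε : ℝ, 0 < ε → ε < ε₀ →
      ∀ μ : Measure ℝ,
        μ = volume.withDensity (fun x => ENNReal.ofReal
          (Real.exp (-(x ^ 4 + x ^ 2 / 2) / ε)
            / ∫ y : ℝ, Real.exp (-(y ^ 4 + y ^ 2 / 2) / ε))) →
        |(∫ x, x ^ 2 ∂μ) - ε| ≤ C * ε ^ 2 ∧
        |(∫ x, x ^ 4 ∂μ) - 3 * ε ^ 2| ≤ C * ε ^ 3 := by
  refine ⟨300, 1/6, by norm_num, by norm_num, fun ε hε hε₀ μ hμ => ?_⟩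
  set s := Real.sqrt ε with hs_def
  have hs : 0 < s := Real.sqrt_pos.2 hε
  have hs2 : s ^ 2 = ε := Real.sq_sqrt hε.le
  set g0 := gmom 0 with hg0_def
  have hg0 : 0 < g0 := gmom_zero_pos
  set f0 := fmom ε 0 with hf0_def
  set f2 := fmom ε 2 with hf2_def
  set f4 := fmom ε 4 with hf4_def
  have c0 : |f0 - g0| ≤ 3 * ε * g0 := by
    have h := fmom_close hε.le (k := 0) Even.zero
    rw [show (0+4 : ℕ) = 4 from rfl, gmom4, ← hf0_def, ← hg0_def] at h
    calc |f0 - g0| ≤ ε * (3 * g0) := h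
      _ = 3 * ε * g0 := by ring
  have c2 : |f2 - g0| ≤ 15 * ε * g0 := by
    have h := fmom_close hε.le (k := 2) ⟨1, rfl⟩
    rw [show (2+4 : ℕ) = 6 from rfl, gmom6, gmom2, ← hf2_def, ← hg0_def] at h
    calc |f2 - g0| ≤ ε * (15 * g0) := h
      _ = 15 * ε * g0 := by ring
  have c4 : |f4 - 3 * g0| ≤ 105 * ε * g0 := by
    have h := fmom_close hε.le (k := 4) ⟨2, rfl⟩
    rw [show (4+4 : ℕ) = 8 from rfl, gmom8, gmom4, ← hf4_def, ← hg0_def] at h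
    calc |f4 - 3 * g0| ≤ ε * (105 * g0) := h
      _ = 105 * ε * g0 := by ring
  have hf0 : g0 / 2 ≤ f0 := by
    have h1 := (abs_le.1 c0).1
    nlinarith
  have hf0pos : 0 < f0 := lt_of_lt_of_le (by positivity) hf0
  -- the normalization constant
  have hZ : (∫ y : ℝ, Real.exp (-(y ^ 4 + y ^ 2 / 2) / ε)) = s * f0 := by
    have := change_var hε 0
    simpa using this
  have hZpos : 0 < s * f0 := mul_pos hs hf0pos
  -- moments of μ
  have hmom : ∀ k : ℕ, (∫ x, x ^ k ∂μ) = s ^ k * fmom ε k / f0 := by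
    intro k
    rw [hμ]
    have hZ' : ∀ x : ℝ, ENNReal.ofReal
        (Real.exp (-(x ^ 4 + x ^ 2 / 2) / ε) / ∫ y : ℝ, Real.exp (-(y ^ 4 + y ^ 2 / 2) / ε))
        = ((Real.toNNReal (Real.exp (-(x ^ 4 + x ^ 2 / 2) / ε) / (s * f0)) : NNReal) : ENNReal) := by
      intro x; rw [hZ]; rfl
    simp_rw [hZ']
    rw [integral_withDensity_eq_integral_smul]
    · have : ∀ x : ℝ, (Real.toNNReal (Real.exp (-(x ^ 4 + x ^ 2 / 2) / ε) / (s * f0)) : NNReal) • x ^ k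
          = (x ^ k * Real.exp (-(x ^ 4 + x ^ 2 / 2) / ε)) / (s * f0) := by
        intro x
        rw [NNReal.smul_def, smul_eq_mul, Real.coe_toNNReal _ (by positivity)]
        ring
      rw [funext this, integral_div, change_var hε k]
      field_simp
      ring
    · apply Measurable.real_toNNReal
      apply Measurable.div_const
      apply Measurable.exp
      exact (measurable_id.pow_const 4).add ((measurable_id.pow_const 2).div_const 2) |>.neg.div_const ε
  have hm2 : (∫ x, x ^ 2 ∂μ) = ε * f2 / f0 := by rw [hmom 2, hs2]
  have hm4 : (∫ x, x ^ 4 ∂μ) = ε ^ 2 * f4 / f0 := by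
    rw [hmom 4, show s ^ 4 = (s ^ 2) ^ 2 by ring, hs2]
  constructor
  · rw [hm2, show ε * f2 / f0 - ε = ε * (f2 - f0) / f0 by field_simp,
      abs_div, abs_mul, abs_of_pos hε, abs_of_pos hf0pos]
    rw [div_le_iff₀ hf0pos]
    have h1 : |f2 - f0| ≤ 18 * ε * g0 := by
      calc |f2 - f0| ≤ |f2 - g0| + |f0 - g0| := by
            have := abs_sub_abs_le_abs_sub (f2 - g0) (f0 - g0)
            have h := abs_sub (f2 - g0) (f0 - g0)
            calc |f2 - f0| = |(f2 - g0) - (f0 - g0)| := by ring_nf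
              _ ≤ |f2 - g0| + |f0 - g0| := abs_sub _ _
        _ ≤ 18 * ε * g0 := by linarith
    nlinarith [abs_nonneg (f2 - f0)]
  · rw [hm4, show ε ^ 2 * f4 / f0 - 3 * ε ^ 2 = ε ^ 2 * (f4 - 3 * f0) / f0 by field_simp,
      abs_div, abs_mul, abs_of_pos (by positivity : (0:ℝ) < ε ^ 2), abs_of_pos hf0pos]
    rw [div_le_iff₀ hf0pos]
    have h2 : |3 * f0 - 3 * g0| ≤ 9 * ε * g0 := by
      rw [show 3 * f0 - 3 * g0 = 3 * (f0 - g0) by ring, abs_mul,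
        abs_of_pos (by norm_num : (0:ℝ) < 3)]
      linarith
    have h3 : |f4 - 3 * f0| = |(f4 - 3 * g0) - (3 * f0 - 3 * g0)| := by ring_nf
    have h1 : |f4 - 3 * f0| ≤ 114 * ε * g0 := by
      rw [h3]
      calc |(f4 - 3 * g0) - (3 * f0 - 3 * g0)| ≤ |f4 - 3 * g0| + |3 * f0 - 3 * g0| := abs_sub _ _
        _ ≤ 114 * ε * g0 := by linarith
    nlinarith [mul_le_mul_of_nonneg_left h1 (sq_nonneg ε),
      mul_le_mul_of_nonneg_left hf0 (le_of_lt (pow_pos hε 3)), mul_pos (pow_pos hε 3) hf0pos]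
end

section
/- Let V, W be independent χ²(1) random variables and ε ∈ (0,1). Then E[exp(((1−ε)/(2ε))(εW − V))·1_{εW < V}] = (2/π)·arctan(√ε). -/
open MeasureTheory ProbabilityTheory Real Set

lemma aux_exp_int : Integrable (fun x : ℝ => Real.exp (-(x^2)/2)) := by
  have := integrable_exp_neg_mul_sq (by norm_num : (0:ℝ) < 1/2)
  convert this using 2 with x
  ring_nf

lemma aux_radial : ∫ r in Set.Ioi (0:ℝ), r * Real.exp (-(r^2)/2) = 1 := by
  have hderiv : ∀ x ∈ Set.Ici (0:ℝ),
      HasDerivAt (fun r : ℝ => -Real.exp (-(r^2)/2)) (x * Real.exp (-(x^2)/2)) x := by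
    intro x _
    have h1 : HasDerivAt (fun r : ℝ => -(r^2)/2) (-x) x := by
      have := ((hasDerivAt_pow 2 x).neg).div_const 2
      simpa using this.congr_deriv (by ring)
    have := (h1.exp).neg
    exact this.congr_deriv (by ring)
  have hint : IntegrableOn (fun r : ℝ => r * Real.exp (-(r^2)/2)) (Set.Ioi 0) := by
    have : Integrable (fun x : ℝ => x * Real.exp (-(1/2) * x^2)) :=
      integrable_mul_exp_neg_mul_sq (by norm_num)
    have h2 : Integrable (fun x : ℝ => x * Real.exp (-(x^2)/2)) := by
      convert this using 2 with x; ring_nf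
    exact h2.integrableOn
  have htend : Filter.Tendsto (fun r : ℝ => -Real.exp (-(r^2)/2)) Filter.atTop (nhds 0) := by
    rw [← neg_zero]
    refine (Filter.Tendsto.neg ?_)
    have h1 : Filter.Tendsto (fun r : ℝ => -(r^2)/2) Filter.atTop Filter.atBot := by
      apply Filter.Tendsto.atBot_div_const (by norm_num)
      exact Filter.tendsto_neg_atBot_iff.mpr (Filter.tendsto_pow_atTop (by norm_num))
    exact Real.tendsto_exp_atBot.comp h1
  have := MeasureTheory.integral_Ioi_of_hasDerivAt_of_tendsto' hderiv hint htend
  simpa using this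

lemma aux_gauss_integral (g : ℝ → ℝ) :
    ∫ x, g x ∂(gaussianReal 0 1) = ∫ x, gaussianPDFReal 0 1 x * g x := by
  rw [gaussianReal_of_var_ne_zero _ one_ne_zero]
  have : gaussianPDF 0 1 = fun x => ((gaussianPDFReal 0 1 x).toNNReal : ENNReal) := by
    funext x; rfl
  rw [this, integral_withDensity_eq_integral_smul
    (by exact (measurable_gaussianPDFReal 0 1).real_toNNReal) g]
  congr 1
  funext x
  simp [NNReal.smul_def, Real.coe_toNNReal _ (gaussianPDFReal_nonneg 0 1 x)]

lemma gauss_pdf_eq (x : ℝ) :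
    gaussianPDFReal 0 1 x = (Real.sqrt (2 * π))⁻¹ * Real.exp (-(x^2)/2) := by
  simp [gaussianPDFReal]

lemma aux_angular (ε : ℝ) (hε : 0 < ε) (hε1 : ε < 1) :
    ∫ θ in Set.Ioo (-π) π,
      Set.indicator {θ : ℝ | Real.sin θ ^ 2 < ε * Real.cos θ ^ 2} (fun _ => (1:ℝ)) θ
      = 4 * Real.arctan (Real.sqrt ε) := by
  set α := Real.arctan (Real.sqrt ε) with hαdef
  have hα0 : 0 < α := by
    rw [hαdef, ← Real.arctan_zero]
    exact Real.arctan_strictMono (Real.sqrt_pos.mpr hε)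
  have hα2 : α < π / 2 := Real.arctan_lt_pi_div_two _
  have hπ : 0 < π := Real.pi_pos
  have hcosα : Real.cos α = (Real.sqrt (1 + ε))⁻¹ := by
    rw [hαdef, Real.cos_arctan]
    rw [Real.sq_sqrt hε.le]
    simp [one_div]
  have hcosα_pos : 0 < Real.cos α := by
    rw [hcosα]; positivity
  have hcossq : Real.cos α ^ 2 = (1 + ε)⁻¹ := by
    rw [hcosα, inv_pow, Real.sq_sqrt (by linarith)]
  have hiff : ∀ θ : ℝ, (Real.sin θ ^ 2 < ε * Real.cos θ ^ 2 ↔ Real.cos α < |Real.cos θ|) := by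
    intro θ
    rw [Real.sin_sq θ]
    have h1ε : (0:ℝ) < 1 + ε := by linarith
    have hinv : (1 + ε) * (1 + ε)⁻¹ = 1 := mul_inv_cancel₀ (ne_of_gt h1ε)
    constructor
    · intro h
      have h2 : Real.cos α ^ 2 < Real.cos θ ^ 2 := by
        rw [hcossq]
        by_contra hcon
        push_neg at hcon
        have h3 : (1 + ε) * Real.cos θ ^ 2 ≤ (1 + ε) * (1 + ε)⁻¹ :=
          mul_le_mul_of_nonneg_left hcon h1ε.le
        rw [hinv] at h3
        nlinarith
      rw [← sq_abs (Real.cos θ)] at h2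
      exact lt_of_pow_lt_pow_left₀ 2 (abs_nonneg _) h2
    · intro h
      have h2 : Real.cos α ^ 2 < Real.cos θ ^ 2 := by
        rw [← sq_abs (Real.cos θ)]
        exact pow_lt_pow_left₀ h hcosα_pos.le two_ne_zero
      rw [hcossq] at h2
      have h3 := mul_lt_mul_of_pos_left h2 h1ε
      rw [hinv] at h3
      nlinarith
  have key : ∀ t : ℝ, 0 ≤ t → t < π → (Real.cos α < |Real.cos t| ↔ t < α ∨ π - α < t) := by
    intro t ht0 htπ
    rcases le_or_gt t (π / 2) with ht | ht
    · have hc : 0 ≤ Real.cos t := Real.cos_nonneg_of_mem_Icc ⟨by linarith, ht⟩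
      rw [abs_of_nonneg hc]
      constructor
      · intro h
        left
        by_contra hcon
        push_neg at hcon
        have h2 : Real.cos t ≤ Real.cos α :=
          Real.strictAntiOn_cos.antitoneOn ⟨hα0.le, by linarith⟩ ⟨ht0, htπ.le⟩ hcon
        linarith
      · rintro (h | h)
        · exact Real.cos_lt_cos_of_nonneg_of_le_pi ht0 (by linarith) h
        · exfalso; linarith
    · have hc : Real.cos t ≤ 0 := Real.cos_nonpos_of_pi_div_two_le_of_le ht.le (by linarith)
      rw [abs_of_nonpos hc]
      have hneg : -Real.cos t = Real.cos (π - t) := by rw [Real.cos_pi_sub]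
      rw [hneg]
      constructor
      · intro h
        right
        by_contra hcon
        push_neg at hcon
        have h2 : Real.cos (π - t) ≤ Real.cos α :=
          Real.strictAntiOn_cos.antitoneOn ⟨hα0.le, by linarith⟩ ⟨by linarith, by linarith⟩
            (by linarith)
        linarith
      · rintro (h | h)
        · exfalso; linarith
        · exact Real.cos_lt_cos_of_nonneg_of_le_pi (by linarith) (by linarith) (by linarith)
  have hset : {θ : ℝ | Real.sin θ ^ 2 < ε * Real.cos θ ^ 2} ∩ Set.Ioo (-π) π
      = Set.Ioo (-π) (α - π) ∪ Set.Ioo (-α) α ∪ Set.Ioo (π - α) π := by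
    ext θ
    simp only [Set.mem_inter_iff, Set.mem_setOf_eq, Set.mem_Ioo, Set.mem_union]
    constructor
    · rintro ⟨h, hθ1, hθ2⟩
      have h' := (hiff θ).mp h
      have habs : |θ| < π := abs_lt.mpr ⟨hθ1, hθ2⟩
      have hk := key |θ| (abs_nonneg θ) habs
      rw [Real.cos_abs] at hk
      rcases hk.mp h' with h1 | h1
      · exact Or.inl (Or.inr (abs_lt.mp h1))
      · rcases lt_abs.mp h1 with h2 | h2
        · exact Or.inr ⟨h2, hθ2⟩
        · exact Or.inl (Or.inl ⟨hθ1, by linarith⟩)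
    · intro h
      have hmem : (-π < θ ∧ θ < π) ∧ (|θ| < α ∨ π - α < |θ|) := by
        rcases h with (⟨h1, h2⟩ | ⟨h1, h2⟩) | ⟨h1, h2⟩
        · exact ⟨⟨h1, by linarith⟩, Or.inr (lt_abs.mpr (Or.inr (by linarith)))⟩
        · exact ⟨⟨by linarith, by linarith⟩, Or.inl (abs_lt.mpr ⟨h1, h2⟩)⟩
        · exact ⟨⟨by linarith, h2⟩, Or.inr (lt_abs.mpr (Or.inl h1))⟩
      obtain ⟨⟨hm1, hm2⟩, hcase⟩ := hmem
      refine ⟨(hiff θ).mpr ?_, hm1, hm2⟩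
      have hk := key |θ| (abs_nonneg θ) (abs_lt.mpr ⟨hm1, hm2⟩)
      rw [Real.cos_abs] at hk
      exact hk.mpr hcase
  have hSmeas : MeasurableSet {θ : ℝ | Real.sin θ ^ 2 < ε * Real.cos θ ^ 2} :=
    measurableSet_lt (by fun_prop) (by fun_prop)
  rw [setIntegral_indicator hSmeas, setIntegral_const, Set.inter_comm, hset]
  have hd1 : Disjoint (Set.Ioo (-π) (α - π)) (Set.Ioo (-α) α) := by
    apply Set.disjoint_left.mpr
    rintro x ⟨hx1, hx2⟩ ⟨hy1, hy2⟩
    linarith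
  have hd2 : Disjoint (Set.Ioo (-π) (α - π) ∪ Set.Ioo (-α) α) (Set.Ioo (π - α) π) := by
    apply Set.disjoint_left.mpr
    rintro x (⟨hx1, hx2⟩ | ⟨hx1, hx2⟩) ⟨hy1, hy2⟩ <;> linarith
  rw [measureReal_def, measure_union hd2 measurableSet_Ioo, measure_union hd1 measurableSet_Ioo,
    Real.volume_Ioo, Real.volume_Ioo, Real.volume_Ioo,
    ← ENNReal.ofReal_add (by linarith) (by linarith),
    ← ENNReal.ofReal_add (by linarith) (by linarith),
    ENNReal.toReal_ofReal (by linarith)]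
  rw [smul_eq_mul, mul_one]
  ring

theorem stmt_15 {Ω : Type*} [MeasurableSpace Ω] (μ : Measure Ω) [IsProbabilityMeasure μ]
    (v w : Ω → ℝ) (hv : Measurable v) (hw : Measurable w)
    (hvw : IndepFun v w μ)
    (hvlaw : Measure.map v μ = gaussianReal 0 1)
    (hwlaw : Measure.map w μ = gaussianReal 0 1)
    (ε : ℝ) (hε : 0 < ε) (hε1 : ε < 1) :
    ∫ ω, (Set.indicator {ω | ε * (w ω) ^ 2 < (v ω) ^ 2}
        (fun ω => Real.exp (((1 - ε) / (2 * ε)) * (ε * (w ω) ^ 2 - (v ω) ^ 2))) ω) ∂μ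
      = (2 / Real.pi) * Real.arctan (Real.sqrt ε) := by
  have hπ := Real.pi_pos
  have hsε : (0:ℝ) < Real.sqrt ε := Real.sqrt_pos.mpr hε
  have hsq : Real.sqrt ε ^ 2 = ε := Real.sq_sqrt hε.le
  set A : Set (ℝ × ℝ) := {p : ℝ × ℝ | ε * p.2 ^ 2 < p.1 ^ 2} with hA
  set G : ℝ × ℝ → ℝ := Set.indicator A
      (fun p => Real.exp ((1 - ε) / (2 * ε) * (ε * p.2 ^ 2 - p.1 ^ 2))) with hGdef
  have hAm : MeasurableSet A := measurableSet_lt (by fun_prop) (by fun_prop)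
  have hGm : Measurable G := Measurable.indicator (by fun_prop) hAm
  -- Step 1: transfer to the product of Gaussians
  have hmap : Measure.map (fun ω => (v ω, w ω)) μ
      = (gaussianReal 0 1).prod (gaussianReal 0 1) := by
    rw [(indepFun_iff_map_prod_eq_prod_map_map hv.aemeasurable hw.aemeasurable).mp hvw,
      hvlaw, hwlaw]
  have h1 : (∫ ω, (Set.indicator {ω | ε * (w ω) ^ 2 < (v ω) ^ 2}
        (fun ω => Real.exp (((1 - ε) / (2 * ε)) * (ε * (w ω) ^ 2 - (v ω) ^ 2))) ω) ∂μ)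
      = ∫ p, G p ∂((gaussianReal 0 1).prod (gaussianReal 0 1)) := by
    rw [← hmap, integral_map (hv.prodMk hw).aemeasurable hGm.aestronglyMeasurable]
    congr 1
  -- Integrability of G
  have hGbd : ∀ p : ℝ × ℝ, ‖G p‖ ≤ 1 := by
    intro p
    rw [Real.norm_eq_abs, hGdef]
    by_cases hp : p ∈ A
    · rw [Set.indicator_of_mem hp, abs_of_nonneg (Real.exp_nonneg _)]
      rw [Real.exp_le_one_iff]
      have hp' : ε * p.2 ^ 2 - p.1 ^ 2 < 0 := by
        have := hp
        simp only [hA, Set.mem_setOf_eq] at this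
        linarith
      have hcpos : 0 ≤ (1 - ε) / (2 * ε) :=
        div_nonneg (by linarith) (by linarith)
      exact mul_nonpos_of_nonneg_of_nonpos hcpos hp'.le
    · rw [Set.indicator_of_notMem hp]; simp
  have hGint : Integrable G ((gaussianReal 0 1).prod (gaussianReal 0 1)) :=
    Integrable.mono' (integrable_const (1:ℝ)) hGm.aestronglyMeasurable (ae_of_all _ hGbd)
  -- Step 2: to Lebesgue with density
  set K : ℝ × ℝ → ℝ := fun p =>
    gaussianPDFReal 0 1 p.1 * (gaussianPDFReal 0 1 p.2 * G p) with hK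
  have h2 : ∫ p, G p ∂((gaussianReal 0 1).prod (gaussianReal 0 1))
      = ∫ x, ∫ y, K (x, y) := by
    rw [integral_prod _ hGint, aux_gauss_integral]
    congr 1
    funext x
    rw [aux_gauss_integral, ← integral_const_mul]
  have hKm : Measurable K := by
    apply Measurable.mul
    · exact (measurable_gaussianPDFReal 0 1).comp measurable_fst
    · exact ((measurable_gaussianPDFReal 0 1).comp measurable_snd).mul hGm
  have hKint : Integrable K (volume : Measure (ℝ × ℝ)) := by
    have hdom : Integrable (fun p : ℝ × ℝ =>
        gaussianPDFReal 0 1 p.1 * gaussianPDFReal 0 1 p.2) (volume : Measure (ℝ × ℝ)) := by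
      rw [Measure.volume_eq_prod]
      exact (integrable_gaussianPDFReal 0 1).mul_prod (integrable_gaussianPDFReal 0 1)
    refine hdom.mono' hKm.aestronglyMeasurable (ae_of_all _ ?_)
    intro p
    rw [hK, Real.norm_eq_abs, abs_mul, abs_mul,
      abs_of_nonneg (gaussianPDFReal_nonneg 0 1 p.1),
      abs_of_nonneg (gaussianPDFReal_nonneg 0 1 p.2)]
    calc gaussianPDFReal 0 1 p.1 * (gaussianPDFReal 0 1 p.2 * |G p|)
        ≤ gaussianPDFReal 0 1 p.1 * (gaussianPDFReal 0 1 p.2 * 1) := by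
          gcongr
          · exact gaussianPDFReal_nonneg 0 1 p.1
          · exact gaussianPDFReal_nonneg 0 1 p.2
          · exact hGbd p
      _ = gaussianPDFReal 0 1 p.1 * gaussianPDFReal 0 1 p.2 := by ring
  -- the target function after substitution
  set B : Set (ℝ × ℝ) := {p : ℝ × ℝ | p.2 ^ 2 < ε * p.1 ^ 2} with hB
  set H : ℝ × ℝ → ℝ := Set.indicator B (fun p => Real.exp (-(p.1^2 + p.2^2)/2)) with hH
  have hBm : MeasurableSet B := measurableSet_lt (by fun_prop) (by fun_prop)
  have hHm : Measurable H := Measurable.indicator (by fun_prop) hBm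
  have hHint : Integrable H (volume : Measure (ℝ × ℝ)) := by
    have hdom : Integrable (fun p : ℝ × ℝ =>
        Real.exp (-(p.1^2)/2) * Real.exp (-(p.2^2)/2)) (volume : Measure (ℝ × ℝ)) := by
      rw [Measure.volume_eq_prod]
      exact aux_exp_int.mul_prod aux_exp_int
    refine hdom.mono' hHm.aestronglyMeasurable (ae_of_all _ ?_)
    intro p
    rw [Real.norm_eq_abs, hH, ← Real.exp_add]
    have heq : -(p.1^2)/2 + -(p.2^2)/2 = -(p.1^2 + p.2^2)/2 := by ring
    rw [heq]
    by_cases hp : p ∈ B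
    · rw [Set.indicator_of_mem hp, abs_of_nonneg (Real.exp_nonneg _)]
    · rw [Set.indicator_of_notMem hp]
      simp [Real.exp_nonneg]
  -- Pointwise substitution identity
  have hconst : (Real.sqrt (2*π))⁻¹ * (Real.sqrt (2*π))⁻¹ = (2*π)⁻¹ := by
    rw [← mul_inv, Real.mul_self_sqrt (by positivity)]
  have hpoint : ∀ a b : ℝ, K (Real.sqrt ε * a, (Real.sqrt ε)⁻¹ * b)
      = (2*π)⁻¹ * H (a, b) := by
    intro a b
    have hsq2 : (Real.sqrt ε * a)^2 = ε * a^2 := by rw [mul_pow, hsq]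
    have hsq3 : ((Real.sqrt ε)⁻¹ * b)^2 = ε⁻¹ * b^2 := by rw [mul_pow, inv_pow, hsq]
    have hcond : (ε * ((Real.sqrt ε)⁻¹ * b)^2 < (Real.sqrt ε * a)^2) ↔ b^2 < ε * a^2 := by
      rw [hsq2, hsq3, ← mul_assoc, mul_inv_cancel₀ hε.ne', one_mul]
    by_cases hmem : b^2 < ε * a^2
    · have hm1 : ((Real.sqrt ε * a, (Real.sqrt ε)⁻¹ * b) : ℝ × ℝ) ∈ A := by
        simp only [hA, Set.mem_setOf_eq]
        exact hcond.mpr hmem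
      have hm2 : ((a, b) : ℝ × ℝ) ∈ B := hmem
      simp only [hK, hGdef, hH]
      rw [Set.indicator_of_mem hm1, Set.indicator_of_mem hm2]
      simp only
      rw [gauss_pdf_eq, gauss_pdf_eq, hsq2, hsq3]
      have hW : (-(ε * a^2)/2) + (-(ε⁻¹ * b^2)/2)
          + ((1 - ε) / (2 * ε) * (ε * (ε⁻¹ * b^2) - ε * a^2)) = -(a^2 + b^2)/2 := by
        field_simp
        ring
      rw [← hW, Real.exp_add, Real.exp_add, ← hconst]
      ring
    · have hm1 : ((Real.sqrt ε * a, (Real.sqrt ε)⁻¹ * b) : ℝ × ℝ) ∉ A := by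
        simp only [hA, Set.mem_setOf_eq]
        rw [hcond]
        exact hmem
      have hm2 : ((a, b) : ℝ × ℝ) ∉ B := hmem
      simp only [hK, hGdef, hH]
      rw [Set.indicator_of_notMem hm1, Set.indicator_of_notMem hm2]
      ring
  -- Step 3: substitution
  have h3 : (∫ x, ∫ y, K (x, y)) = (2*π)⁻¹ * ∫ p : ℝ × ℝ, H p := by
    have hinner : ∀ x : ℝ, (∫ y, K (x, y))
        = (Real.sqrt ε)⁻¹ * ∫ b, K (x, (Real.sqrt ε)⁻¹ * b) := by
      intro x
      conv_rhs => rw [Measure.integral_comp_mul_left (fun y => K (x, y)) ((Real.sqrt ε)⁻¹)]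
      rw [inv_inv, abs_of_pos hsε, smul_eq_mul, ← mul_assoc, inv_mul_cancel₀ hsε.ne', one_mul]
    simp only [hinner]
    rw [integral_const_mul]
    have houter : (∫ x, ∫ b, K (x, (Real.sqrt ε)⁻¹ * b))
        = Real.sqrt ε * ∫ a, ∫ b, K (Real.sqrt ε * a, (Real.sqrt ε)⁻¹ * b) := by
      conv_rhs => rw [Measure.integral_comp_mul_left
        (fun x => ∫ b, K (x, (Real.sqrt ε)⁻¹ * b)) (Real.sqrt ε)]
      rw [abs_of_pos (by positivity : (0:ℝ) < (Real.sqrt ε)⁻¹), smul_eq_mul, ← mul_assoc,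
        mul_inv_cancel₀ hsε.ne', one_mul]
    rw [houter, ← mul_assoc, inv_mul_cancel₀ hsε.ne', one_mul]
    simp only [hpoint]
    have hHint2 : Integrable (fun p : ℝ × ℝ => (2*π)⁻¹ * H p) (Measure.prod volume volume) := by
      rw [← Measure.volume_eq_prod]
      exact hHint.const_mul _
    calc (∫ (a : ℝ), ∫ (b : ℝ), (2*π)⁻¹ * H (a, b))
        = ∫ p : ℝ × ℝ, (2*π)⁻¹ * H p ∂(Measure.prod volume volume) :=
          (integral_prod _ hHint2).symm
      _ = (2*π)⁻¹ * ∫ p : ℝ × ℝ, H p := by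
          rw [← Measure.volume_eq_prod, integral_const_mul]
  -- Step 4: polar coordinates
  have h4 : (∫ p : ℝ × ℝ, H p) = 4 * Real.arctan (Real.sqrt ε) := by
    rw [← integral_comp_polarCoord_symm H]
    have htarget : polarCoord.target = Set.Ioi (0:ℝ) ×ˢ Set.Ioo (-π) π := rfl
    rw [htarget]
    have hcongr : EqOn (fun p : ℝ × ℝ => p.1 • H (polarCoord.symm p))
        (fun p : ℝ × ℝ => (p.1 * Real.exp (-(p.1^2)/2)) *
          Set.indicator {θ : ℝ | Real.sin θ ^ 2 < ε * Real.cos θ ^ 2} (fun _ => (1:ℝ)) p.2)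
        (Set.Ioi (0:ℝ) ×ˢ Set.Ioo (-π) π) := by
      rintro ⟨r, θ⟩ ⟨hr, hθ⟩
      simp only [polarCoord_symm_apply, smul_eq_mul]
      have hr0 : (0:ℝ) < r := hr
      have hr2 : (0:ℝ) < r^2 := by positivity
      by_cases hmem : Real.sin θ ^ 2 < ε * Real.cos θ ^ 2
      · have hm2 : ((r * Real.cos θ, r * Real.sin θ) : ℝ × ℝ) ∈ B := by
          simp only [hB, Set.mem_setOf_eq]
          calc (r * Real.sin θ)^2 = r^2 * Real.sin θ^2 := by ring
            _ < r^2 * (ε * Real.cos θ^2) := by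
                exact mul_lt_mul_of_pos_left hmem hr2
            _ = ε * (r * Real.cos θ)^2 := by ring
        simp only [hH]
        rw [Set.indicator_of_mem hm2, Set.indicator_of_mem
          (show θ ∈ {θ : ℝ | Real.sin θ ^ 2 < ε * Real.cos θ ^ 2} from hmem)]
        have h5 : (r * Real.cos θ)^2 + (r * Real.sin θ)^2 = r^2 := by
          calc (r * Real.cos θ)^2 + (r * Real.sin θ)^2
              = r^2 * (Real.sin θ^2 + Real.cos θ^2) := by ring
            _ = r^2 := by rw [Real.sin_sq_add_cos_sq, mul_one]
        rw [h5, mul_one]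
      · have hm2 : ((r * Real.cos θ, r * Real.sin θ) : ℝ × ℝ) ∉ B := by
          simp only [hB, Set.mem_setOf_eq]
          intro hcon
          apply hmem
          have : r^2 * Real.sin θ^2 < r^2 * (ε * Real.cos θ^2) := by
            calc r^2 * Real.sin θ^2 = (r * Real.sin θ)^2 := by ring
              _ < ε * (r * Real.cos θ)^2 := hcon
              _ = r^2 * (ε * Real.cos θ^2) := by ring
          exact lt_of_mul_lt_mul_left this hr2.le
        simp only [hH]
        rw [Set.indicator_of_notMem hm2, Set.indicator_of_notMem
          (show θ ∉ {θ : ℝ | Real.sin θ ^ 2 < ε * Real.cos θ ^ 2} from hmem)]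
        ring
    rw [setIntegral_congr_fun (measurableSet_Ioi.prod measurableSet_Ioo) hcongr]
    rw [Measure.volume_eq_prod]
    have hprodmul := setIntegral_prod_mul (μ := (volume : Measure ℝ)) (ν := (volume : Measure ℝ))
      (fun x : ℝ => x * Real.exp (-(x^2)/2))
      (Set.indicator {θ : ℝ | Real.sin θ ^ 2 < ε * Real.cos θ ^ 2} (fun _ => (1:ℝ)))
      (Set.Ioi 0) (Set.Ioo (-π) π)
    rw [hprodmul, aux_radial, aux_angular ε hε hε1, one_mul]
  rw [h1, h2, h3, h4]
  rw [div_mul_eq_mul_div, mul_comm]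
  field_simp
  ring
end
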